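/- Let p be an odd prime that is not a Wieferich prime, ζ a primitive p-th root of unity, and φ(z) = (z − 1)^p + 2 − ζ. Then for every m ≥ 1, the integer N_{ℚ(ζ)/ℚ}(φ^m(1)) is not a p-th power of an integer. -/

import Mathlib

/-!
Put `η = ζ - 1`, so that `φ z = (z - 1) ^ p + 1 - η`. Then `η ∣ φ^[k] 1 - 1` for `k ≥ 1`, hence
`φ^[m] 1 ≡ φ 1 = 2 - ζ` modulo `η ^ p`. Every Galois conjugate of `η` is an associate of `η`, so
the norms of `φ^[m] 1` and `2 - ζ` agree modulo `η ^ p`, and since `N η = p` an integer `n`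
divisible by `η ^ p` is divisible by `p ^ 2` (taking norms, `p ^ p ∣ n ^ (p - 1)`). As
`N (2 - ζ) = Φ_p(2) = 2 ^ p - 1`, a `p`-th power `y ^ p` equal to `N (φ^[m] 1)` satisfies
`y ^ p ≡ 2 ^ p - 1 (mod p ^ 2)`. Reducing mod `p` gives `y ≡ 1`, so `y ^ p ≡ 1 (mod p ^ 2)` and
`2 ^ (p - 1) ≡ 1 (mod p ^ 2)`: `p` would be a Wieferich prime.
-/

open NumberField Polynomial

theorem Prime.sq_dvd_of_pow_succ_dvd_pow {R : Type*} [CommMonoidWithZero R] [IsCancelMulZero R]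
    {p n : R} (hp : Prime p) {j : ℕ} (h : p ^ (j + 1) ∣ n ^ j) : p ^ 2 ∣ n := by
  obtain ⟨m, rfl⟩ := hp.dvd_of_dvd_pow ((dvd_pow_self p j.succ_ne_zero).trans h)
  rw [mul_pow, pow_succ, mul_dvd_mul_iff_left (pow_ne_zero j hp.ne_zero)] at h
  rw [sq]
  exact mul_dvd_mul_left p (hp.dvd_of_dvd_pow h)

theorem Finset.dvd_prod_sub_prod {ι R : Type*} [CommRing R] {d : R} (s : Finset ι) {f g : ι → R}
    (h : ∀ i ∈ s, d ∣ f i - g i) : d ∣ ∏ i ∈ s, f i - ∏ i ∈ s, g i := by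
  simp only [← Ideal.mem_span_singleton, ← Ideal.Quotient.mk_eq_mk_iff_sub_mem, map_prod] at h ⊢
  exact Finset.prod_congr rfl h

theorem Int.sq_dvd_two_pow_sub_two {p : ℕ} [Fact p.Prime] {y : ℤ}
    (h : (p : ℤ) ^ 2 ∣ y ^ p - (2 ^ p - 1)) : (p : ℤ) ^ 2 ∣ 2 ^ p - 2 := by
  have hy : (p : ℤ) ∣ y - 1 := by
    have hp := (dvd_pow_self (p : ℤ) two_ne_zero).trans h
    rw [← ZMod.intCast_zmod_eq_zero_iff_dvd] at hp ⊢
    push_cast at hp ⊢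
    rw [ZMod.pow_card, ZMod.pow_card] at hp
    linear_combination hp
  have hyp : (p : ℤ) ^ 2 ∣ y ^ p - 1 := by simpa using dvd_sub_pow_of_dvd_sub hy 1
  have := dvd_sub hyp h
  rwa [sub_sub_sub_cancel_left, sub_sub, one_add_one_eq_two] at this

theorem ZMod.two_pow_pred_eq_one_of_sq_dvd {p : ℕ} (hodd : Odd p) (h : (p : ℤ) ^ 2 ∣ 2 ^ p - 2) :
    (2 : ZMod (p ^ 2)) ^ (p - 1) = 1 := by
  have h2 : IsUnit (2 : ZMod (p ^ 2)) := by
    simpa using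
      (ZMod.unitOfCoprime 2 (Nat.Coprime.pow_right 2 (Nat.coprime_two_left.2 hodd))).isUnit
  have h0 : ((2 : ZMod (p ^ 2)) ^ (p - 1) - 1) * 2 = 0 := by
    rw [sub_mul, ← pow_succ, Nat.sub_add_cancel hodd.pos, one_mul]
    exact_mod_cast (ZMod.intCast_zmod_eq_zero_iff_dvd _ (p ^ 2)).2 (by exact_mod_cast h)
  exact sub_eq_zero.1 (h2.mul_left_eq_zero.1 h0)

section Iterate

variable {R : Type*} [CommRing R] {n : ℕ} {a : R} {f : R → R}

theorem dvd_iterate_succ_sub_one (hn : n ≠ 0) (hf : ∀ z, f z = (z - 1) ^ n + 1 - a) (k : ℕ) :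
    a ∣ f^[k + 1] 1 - 1 := by
  induction k with
  | zero => simp [hf, zero_pow hn]
  | succ k ih =>
    rw [Function.iterate_succ_apply', hf, add_sub_right_comm, add_sub_cancel_right]
    exact (dvd_pow ih hn).sub (dvd_refl a)

theorem pow_dvd_iterate_succ_sub (hn : n ≠ 0) (hf : ∀ z, f z = (z - 1) ^ n + 1 - a) (k : ℕ) :
    a ^ n ∣ f^[k + 1] 1 - (1 - a) := by
  cases k with
  | zero => simp [hf, zero_pow hn]
  | succ k =>
    rw [Function.iterate_succ_apply', hf, add_sub_assoc, add_sub_cancel_right]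
    exact pow_dvd_pow_of_dvd (dvd_iterate_succ_sub_one hn hf k) n

end Iterate

theorem PowerBasis.norm_algebraMap_sub_gen {R S : Type*} [CommRing R] [CommRing S] [Algebra R S]
    (pb : PowerBasis R S) (r : R) :
    Algebra.norm R (algebraMap R S r - pb.gen) = (minpoly R pb.gen).eval r := by
  rw [Algebra.norm_eq_matrix_det pb.basis, map_sub, AlgHom.commutes, ← charpoly_leftMulMatrix,
    Matrix.eval_charpoly]
  rfl

section IntNorm

attribute [local instance] FractionRing.liftAlgebra

theorem Algebra.dvd_algebraMap_intNorm_sub {A B : Type*} [CommRing A] [CommRing B] [Algebra A B]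
    [IsDomain A] [IsIntegrallyClosed A] [IsDomain B] [IsIntegrallyClosed B]
    [Module.Finite A B] [Module.IsTorsionFree A B] [IsGalois (FractionRing A) (FractionRing B)]
    {d x y : B} (hd : ∀ σ : B ≃ₐ[A] B, d ∣ σ d) (h : d ∣ x - y) :
    d ∣ algebraMap A B (Algebra.intNorm A B x) - algebraMap A B (Algebra.intNorm A B y) := by
  rw [Algebra.algebraMap_intNorm_of_isGalois, Algebra.algebraMap_intNorm_of_isGalois]
  refine Finset.dvd_prod_sub_prod _ fun σ _ => ?_
  rw [← map_sub]
  exact (hd σ).trans (map_dvd σ h)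

theorem NumberField.RingOfIntegers.dvd_norm_sub_norm {K : Type*} [Field K] [NumberField K]
    [IsGalois ℚ K] {d x y : 𝓞 K} (hd : ∀ σ : 𝓞 K ≃ₐ[ℤ] 𝓞 K, d ∣ σ d) (h : d ∣ x - y) :
    d ∣ ((Algebra.norm ℤ x - Algebra.norm ℤ y : ℤ) : 𝓞 K) := by
  have : IsGalois (FractionRing ℤ) (FractionRing (𝓞 K)) :=
    IsGalois.of_equiv_equiv (f := (FractionRing.algEquiv ℤ ℚ).toRingEquiv.symm)
      (g := (FractionRing.algEquiv (𝓞 K) K).toRingEquiv.symm) <|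
        RingHom.ext fun x ↦ IsFractionRing.algEquiv_commutes (FractionRing.algEquiv ℤ ℚ).symm
          (FractionRing.algEquiv (𝓞 K) K).symm _
  rw [← Algebra.intNorm_eq_norm, Int.cast_sub, ← eq_intCast (algebraMap ℤ (𝓞 K)),
    ← eq_intCast (algebraMap ℤ (𝓞 K))]
  exact Algebra.dvd_algebraMap_intNorm_sub hd h

end IntNorm

namespace IsPrimitiveRoot

variable {K : Type*} [Field K] [CharZero K] {n : ℕ} [NeZero n] [IsCyclotomicExtension {n} ℚ K]
  {ζ : 𝓞 K}

theorem norm_intCast_sub (hζ : IsPrimitiveRoot ζ n) (r : ℤ) :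
    Algebra.norm ℤ ((r : 𝓞 K) - ζ) = (cyclotomic n ℤ).eval r := by
  have hζK : IsPrimitiveRoot (ζ : K) n := hζ.map_of_injective RingOfIntegers.coe_injective
  have := hζK.integralPowerBasis.norm_algebraMap_sub_gen r
  rwa [integralPowerBasis_gen, toInteger_coe, ← RingOfIntegers.minpoly_coe,
    ← cyclotomic_eq_minpoly hζK (NeZero.pos n), eq_intCast] at this

theorem norm_two_sub {p : ℕ} [Fact p.Prime] [IsCyclotomicExtension {p} ℚ K]
    (hζ : IsPrimitiveRoot ζ p) : Algebra.norm ℤ (2 - ζ) = 2 ^ p - 1 := by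
  have hΦ := congrArg (eval 2) (cyclotomic_prime_mul_X_sub_one ℤ p)
  simp only [eval_mul, eval_sub, eval_X, eval_one, eval_pow] at hΦ
  norm_num at hΦ
  simpa [hΦ] using hζ.norm_intCast_sub 2

theorem sq_dvd_of_sub_one_pow_dvd [NumberField K] {p : ℕ} [hp : Fact p.Prime]
    [IsCyclotomicExtension {p} ℚ K]
    (hζ : IsPrimitiveRoot ζ p) (hp2 : p ≠ 2) {m : ℤ} (h : (ζ - 1) ^ p ∣ (m : 𝓞 K)) :
    (p : ℤ) ^ 2 ∣ m := by
  have hζK : IsPrimitiveRoot (ζ : K) p := hζ.map_of_injective RingOfIntegers.coe_injective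
  have hnorm : Algebra.norm ℤ (ζ - 1) = p := by
    simpa [toInteger_coe] using hζK.norm_toInteger_sub_one_of_prime_ne_two' hp2
  have hrank : Module.finrank ℤ (𝓞 K) = p - 1 := by
    rw [hζK.integralPowerBasis.finrank, integralPowerBasis_dim, Nat.totient_prime hp.out]
  have hdvd := map_dvd (Algebra.norm ℤ) h
  rw [map_pow, hnorm, ← eq_intCast (algebraMap ℤ (𝓞 K)), Algebra.norm_algebraMap, hrank] at hdvd
  refine Prime.sq_dvd_of_pow_succ_dvd_pow (Nat.prime_iff_prime_int.1 hp.out) (j := p - 1) ?_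
  rwa [Nat.sub_add_cancel hp.out.one_le]

end IsPrimitiveRoot

theorem norm_iterate_not_pth_power (p : ℕ+) (hp : Fact (p : ℕ).Prime) (hodd : Odd (p : ℕ))
    (hw : (2 : ZMod ((p : ℕ) ^ 2)) ^ ((p : ℕ) - 1) ≠ 1)
    (K : Type*) [Field K] [Algebra ℚ K] [IsCyclotomicExtension {(p : ℕ)} ℚ K]
    (ζ : 𝓞 K) (hζ : IsPrimitiveRoot ζ (p : ℕ))
    (φ : 𝓞 K → 𝓞 K) (hφ : ∀ z, φ z = (z - 1) ^ (p : ℕ) + 2 - ζ) :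
    ∀ m : ℕ, 1 ≤ m → ¬ ∃ y : ℤ, Algebra.norm ℤ (φ^[m] 1) = y ^ (p : ℕ) := by
  rintro m hm ⟨y, hy⟩
  obtain ⟨k, rfl⟩ := Nat.exists_eq_add_of_le' hm
  have : CharZero K := charZero_of_injective_algebraMap (algebraMap ℚ K).injective
  -- the cyclotomic library is stated for the canonical `ℚ`-algebra structure
  obtain rfl : ‹Algebra ℚ K› = DivisionRing.toRatAlgebra := Subsingleton.elim _ _
  have := IsCyclotomicExtension.numberField {(p : ℕ)} ℚ K
  have := IsCyclotomicExtension.isGalois {(p : ℕ)} ℚ K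
  have hp2 : (p : ℕ) ≠ 2 := fun h => Nat.not_even_iff_odd.2 hodd (h ▸ even_two)
  have hiter : (ζ - 1) ^ (p : ℕ) ∣ φ^[k + 1] 1 - (2 - ζ) := by
    have hφ' (z : 𝓞 K) : φ z = (z - 1) ^ (p : ℕ) + 1 - (ζ - 1) := by rw [hφ]; ring
    simpa [sub_sub_eq_add_sub, one_add_one_eq_two] using pow_dvd_iterate_succ_sub p.ne_zero hφ' k
  have hconj (σ : 𝓞 K ≃ₐ[ℤ] 𝓞 K) : (ζ - 1) ^ (p : ℕ) ∣ σ ((ζ - 1) ^ (p : ℕ)) := by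
    rw [map_pow]
    exact pow_dvd_pow_of_dvd (hζ.associated_sub_one_map_sub_one σ).dvd _
  have hsq : ((p : ℕ) : ℤ) ^ 2 ∣ y ^ (p : ℕ) - (2 ^ (p : ℕ) - 1) := by
    rw [← hy, ← hζ.norm_two_sub]
    exact hζ.sq_dvd_of_sub_one_pow_dvd hp2 (RingOfIntegers.dvd_norm_sub_norm hconj hiter)
  exact hw (ZMod.two_pow_pred_eq_one_of_sq_dvd hodd (Int.sq_dvd_two_pow_sub_two hsq))
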